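/- Let G be a centerless group with automorphism tower ⟨G^α⟩, and let β ≤ γ be ordinals. Then the β-th stage of the normalizer tower of G inside the group G^γ equals G^β: nor_{G^γ}^β(G) = G^β. In other words, up to γ the automorphism tower of G coincides with the normalizer tower of G in G^γ. -/

import Mathlib

universe u

/-- The automorphism tower of a centerless group `G`: an ordinal-indexed increasing
continuous chain of groups, starting at `G`, where each successor stage is (identified
with) the automorphism group of the previous stage via the conjugation embedding. -/
structure AutTower (G : Type u) [Group G] where
  /-- the `o`-th stage `G^o` of the tower -/
  Stage : Ordinal.{u} → GrpCat.{u}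
  /-- the inclusion maps of the tower -/
  map : ∀ ⦃o₁ o₂ : Ordinal.{u}⦄, o₁ ≤ o₂ → (↥(Stage o₁) →* ↥(Stage o₂))
  map_id : ∀ (o : Ordinal.{u}) (x : ↥(Stage o)), map le_rfl x = x
  map_comp : ∀ ⦃o₁ o₂ o₃ : Ordinal.{u}⦄ (h₁ : o₁ ≤ o₂) (h₂ : o₂ ≤ o₃) (x : ↥(Stage o₁)),
      map h₂ (map h₁ x) = map (h₁.trans h₂) x
  map_injective : ∀ ⦃o₁ o₂ : Ordinal.{u}⦄ (h : o₁ ≤ o₂), Function.Injective (map h)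
  /-- the identification of `G` with the `0`-th stage -/
  emb0 : G ≃* ↥(Stage 0)
  /-- the identification of the `(o+1)`-st stage with `Aut(G^o)` -/
  succIso : ∀ o : Ordinal.{u}, ↥(Stage (o + 1)) ≃* MulAut ↥(Stage o)
  /-- under the above identification, the inclusion `G^o ≤ G^{o+1}` is `g ↦` conjugation by `g` -/
  succIso_map : ∀ (o : Ordinal.{u}) (x : ↥(Stage o)),
      succIso o (map (le_self_add : o ≤ o + 1) x) = MulAut.conj x
  /-- at limit stages the tower is continuous: `G^δ = ⋃_{α<δ} G^α` -/
  limit_covers : ∀ (o : Ordinal.{u}), Order.IsSuccLimit o → ∀ x : ↥(Stage o),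
      ∃ (o' : Ordinal.{u}) (h : o' < o), x ∈ Set.range (map h.le)

namespace AutTower

variable {G : Type u} [Group G]

/-- the embedding of `G` into the `o`-th stage of its automorphism tower -/
def embed (T : AutTower G) (o : Ordinal.{u}) : G →* ↥(T.Stage o) :=
  (T.map (zero_le : 0 ≤ o)).comp T.emb0.toMonoidHom

/-- `G^{o+1} = G^o`, i.e. the inclusion of stage `o` into stage `o+1` is onto -/
def StabilizesAt (T : AutTower G) (o : Ordinal.{u}) : Prop :=
  Function.Surjective (T.map (le_self_add : o ≤ o + 1))

end AutTower

/-- The normalizer tower of a subgroup `H` of `G`: `nor_G^0(H) = H`,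
`nor_G^{α+1}(H) = N_G(nor_G^α(H))`, and unions (suprema of the increasing chain)
at limit ordinals. -/
noncomputable def norTower {G : Type u} [Group G] (H : Subgroup G) (o : Ordinal.{u}) :
    Subgroup G :=
  Ordinal.limitRecOn o H (fun _ ih => Subgroup.normalizer (ih : Set G))
    (fun o _ ih => ⨆ (o' : Ordinal.{u}) (h : o' < o), ih o' h)

/-!
The centralizer of `G` in every stage `G^γ` is trivial, by induction on `γ`. At a successor
`γ = δ + 1`, an element of `Aut(G^δ)` centralizing `G` fixes `G` pointwise, and an automorphism
`φ` of `G^δ` fixing `G` pointwise fixes every `G^β`, `β ≤ δ`: for `x ∈ G^{β+1}`, conjugation by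
`x` and by `φ x` agree on `G^β`, so `x⁻¹ φ x` centralizes `G^β ⊇ G`.

Hence, for `α < γ`, an element of `G^γ` normalizing `G^α` induces an automorphism of `G^α`, which
is also induced by an element of `G^{α+1}`; the two differ by a centralizing element, so
`N(G^α) = G^{α+1}` in `G^γ`. The theorem follows by induction on `β`, by continuity at limits.
-/

lemma norTower_zero {K : Type u} [Group K] (H : Subgroup K) : norTower H 0 = H :=
  Ordinal.limitRecOn_zero ..

lemma norTower_add_one {K : Type u} [Group K] (H : Subgroup K) (o : Ordinal.{u}) :
    norTower H (o + 1) = Subgroup.normalizer (norTower H o : Set K) :=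
  Ordinal.limitRecOn_add_one ..

lemma norTower_of_isSuccLimit {K : Type u} [Group K] (H : Subgroup K) {o : Ordinal.{u}}
    (ho : Order.IsSuccLimit o) :
    norTower H o = ⨆ (o' : Ordinal.{u}) (_ : o' < o), norTower H o' :=
  Ordinal.limitRecOn_limit _ _ _ _ ho

namespace Subgroup

variable {K : Type*} [Group K]

theorem inv_mul_mem_centralizer_of_conj_eq {H : Subgroup K} {a b : K}
    (h : ∀ k ∈ H, a * k * a⁻¹ = b * k * b⁻¹) : a⁻¹ * b ∈ centralizer (H : Set K) := by
  rw [mem_centralizer_iff]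
  intro k hk
  calc k * (a⁻¹ * b) = a⁻¹ * (a * k * a⁻¹) * b := by group
    _ = a⁻¹ * (b * k * b⁻¹) * b := by rw [h k hk]
    _ = a⁻¹ * b * k := by group

theorem normalizer_range_le {A : Type*} [Group A] {f : A →* K} (hf : Function.Injective f)
    {S : Subgroup K} (hC : centralizer (f.range : Set K) = ⊥)
    (hS : ∀ φ : MulAut A, ∃ y ∈ S, ∀ a, y * f a * y⁻¹ = f (φ a)) :
    normalizer (f.range : Set K) ≤ S := by
  intro x hx
  let e := MonoidHom.ofInjective hf
  obtain ⟨y, hyS, hy⟩ := hS ((e.trans (normalizerMonoidHom f.range ⟨x, hx⟩)).trans e.symm)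
  have hyx : y⁻¹ * x ∈ centralizer (f.range : Set K) := by
    apply inv_mul_mem_centralizer_of_conj_eq
    rintro _ ⟨a, rfl⟩
    rw [hy, MulEquiv.trans_apply, MulEquiv.trans_apply, MonoidHom.apply_ofInjective_symm]
    rfl
  rw [hC, mem_bot, inv_mul_eq_one] at hyx
  exact hyx ▸ hyS

end Subgroup

namespace AutTower

variable {G : Type u} [Group G] (T : AutTower G)

theorem map_embed {β γ : Ordinal.{u}} (h : β ≤ γ) (g : G) :
    T.map h (T.embed β g) = T.embed γ g :=
  T.map_comp _ _ _

theorem range_map_mono {α β γ : Ordinal.{u}} (hαβ : α ≤ β) (hβγ : β ≤ γ) :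
    (T.map (hαβ.trans hβγ)).range ≤ (T.map hβγ).range := by
  rintro _ ⟨x, rfl⟩
  exact ⟨T.map hαβ x, T.map_comp _ _ _⟩

theorem range_embed (γ : Ordinal.{u}) : (T.embed γ).range = (T.map zero_le).range := by
  rw [embed, MonoidHom.range_comp, MulEquiv.toMonoidHom_eq_coe,
    MonoidHom.range_eq_top.mpr T.emb0.surjective, ← MonoidHom.range_eq_map]

theorem range_embed_le {β γ : Ordinal.{u}} (h : β ≤ γ) :
    (T.embed γ).range ≤ (T.map h).range :=
  T.range_embed γ ▸ T.range_map_mono zero_le h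

theorem conj_map_add_one (α : Ordinal.{u}) (y : T.Stage (α + 1)) (g : T.Stage α) :
    y * T.map le_self_add g * y⁻¹ = T.map le_self_add (T.succIso α y g) := by
  apply (T.succIso α).injective
  ext z
  simp [T.succIso_map]

theorem conj_map {α γ : Ordinal.{u}} (h : α + 1 ≤ γ) (y : T.Stage (α + 1)) (g : T.Stage α) :
    T.map h y * T.map (le_self_add.trans h) g * (T.map h y)⁻¹ =
      T.map (le_self_add.trans h) (T.succIso α y g) := by
  rw [← T.map_comp le_self_add h, ← T.map_comp le_self_add h, ← map_inv, ← map_mul, ← map_mul,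
    conj_map_add_one]

open Subgroup

theorem apply_map_eq_of_forall_apply_embed {δ : Ordinal.{u}}
    (hC : centralizer ((T.embed δ).range : Set (T.Stage δ)) = ⊥)
    {φ : MulAut (T.Stage δ)} (hφ : ∀ g, φ (T.embed δ g) = T.embed δ g)
    {β : Ordinal.{u}} (h : β ≤ δ) (x : T.Stage β) : φ (T.map h x) = T.map h x := by
  induction β using Ordinal.limitRecOn with
  | zero =>
    obtain ⟨g, rfl⟩ := T.emb0.surjective x
    exact hφ g
  | add_one β ih =>
    have hβ : β ≤ δ := le_self_add.trans h
    set a := T.map h x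
    have hconj : ∀ k ∈ (T.map hβ).range, a * k * a⁻¹ = φ a * k * (φ a)⁻¹ := by
      rintro _ ⟨g, rfl⟩
      have e : a * T.map hβ g * a⁻¹ = T.map hβ (T.succIso β x g) := T.conj_map h x g
      calc a * T.map hβ g * a⁻¹ = φ (T.map hβ (T.succIso β x g)) := e.trans (ih hβ _).symm
        _ = φ a * T.map hβ g * (φ a)⁻¹ := by rw [← e, map_mul, map_mul, map_inv, ih hβ g]
    have hcent := centralizer_le (T.range_embed_le hβ) (inv_mul_mem_centralizer_of_conj_eq hconj)
    rw [hC, mem_bot, inv_mul_eq_one] at hcent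
    exact hcent.symm
  | limit β hβ ih =>
    obtain ⟨o, ho, z, rfl⟩ := T.limit_covers β hβ x
    rw [T.map_comp]
    exact ih o ho _ z

theorem mulAut_eq_one_of_forall_apply_embed {δ : Ordinal.{u}}
    (hC : centralizer ((T.embed δ).range : Set (T.Stage δ)) = ⊥)
    {φ : MulAut (T.Stage δ)} (hφ : ∀ g, φ (T.embed δ g) = T.embed δ g) : φ = 1 := by
  ext x
  simpa [T.map_id] using T.apply_map_eq_of_forall_apply_embed hC hφ le_rfl x

theorem centralizer_range_embed (hG : center G = ⊥) (γ : Ordinal.{u}) :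
    centralizer ((T.embed γ).range : Set (T.Stage γ)) = ⊥ := by
  induction γ using Ordinal.limitRecOn with
  | zero =>
    refine eq_bot_iff.mpr fun x hx => ?_
    obtain ⟨g, rfl⟩ := T.emb0.surjective x
    have hg : g ∈ center G := mem_center_iff.mpr fun k => T.emb0.injective <| by
      simpa [embed, T.map_id] using hx _ ⟨k, rfl⟩
    rw [hG, mem_bot] at hg
    simp [hg]
  | add_one δ ih =>
    refine eq_bot_iff.mpr fun x hx => ?_
    have hfix : ∀ g, T.succIso δ x (T.embed δ g) = T.embed δ g := fun g =>
      T.map_injective le_self_add <| by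
        rw [← conj_map_add_one, T.map_embed, ← mem_centralizer_iff.mp hx _ ⟨g, rfl⟩,
          mul_inv_cancel_right]
    rw [mem_bot, ← map_eq_one_iff _ (T.succIso δ).injective]
    exact T.mulAut_eq_one_of_forall_apply_embed ih hfix
  | limit γ hγ ih =>
    refine eq_bot_iff.mpr fun x hx => ?_
    obtain ⟨o, ho, z, rfl⟩ := T.limit_covers γ hγ x
    have hz : z ∈ centralizer ((T.embed o).range : Set (T.Stage o)) := by
      rintro _ ⟨g, rfl⟩
      apply T.map_injective ho.le
      simpa [T.map_embed] using hx _ ⟨g, rfl⟩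
    rw [ih o ho, mem_bot] at hz
    simp [hz]

theorem centralizer_range_map (hG : center G = ⊥) {α γ : Ordinal.{u}} (h : α ≤ γ) :
    centralizer ((T.map h).range : Set (T.Stage γ)) = ⊥ :=
  eq_bot_iff.mpr <| (centralizer_le (T.range_embed_le h)).trans (T.centralizer_range_embed hG γ).le

theorem normalizer_range_map (hG : center G = ⊥) {α γ : Ordinal.{u}} (h : α + 1 ≤ γ) :
    normalizer ((T.map (le_self_add.trans h)).range : Set (T.Stage γ)) = (T.map h).range := by
  apply le_antisymm
  · refine normalizer_range_le (T.map_injective _) (T.centralizer_range_map hG _) fun φ => ?_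
    refine ⟨T.map h ((T.succIso α).symm φ), ⟨_, rfl⟩, fun g => ?_⟩
    rw [T.conj_map, MulEquiv.apply_symm_apply]
  · rw [le_normalizer_iff]
    rintro _ ⟨y, rfl⟩ _ ⟨g, rfl⟩
    exact ⟨_, (T.conj_map h y g).symm⟩

theorem iSup_range_map_of_isSuccLimit {β γ : Ordinal.{u}} (hβ : Order.IsSuccLimit β)
    (h : β ≤ γ) : ⨆ (o : Ordinal.{u}) (ho : o < β), (T.map (ho.le.trans h)).range =
      (T.map h).range := by
  apply le_antisymm
  · exact iSup₂_le fun o ho => T.range_map_mono ho.le h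
  · rintro _ ⟨x, rfl⟩
    obtain ⟨o, ho, z, rfl⟩ := T.limit_covers β hβ x
    rw [T.map_comp]
    exact le_iSup₂ (f := fun o (ho : o < β) => (T.map (ho.le.trans h)).range) o ho ⟨z, rfl⟩

end AutTower

/-- If `G` is centerless and `β ≤ γ`, then the `β`-th stage of the normalizer tower
of `G` inside `G^γ` equals `G^β`: `nor_{G^γ}^β(G) = G^β`; i.e. up to `γ` the
automorphism tower of `G` coincides with the normalizer tower of `G` in `G^γ`
(stages being regarded as subgroups of `G^γ` via the tower embeddings). -/
theorem norTower_eq_stage {G : Type u} [Group G]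
    (hG : Subgroup.center G = ⊥) (T : AutTower G) (β γ : Ordinal.{u}) (h : β ≤ γ) :
    norTower ((T.embed γ).range) β = (T.map h).range := by
  induction β using Ordinal.limitRecOn with
  | zero => rw [norTower_zero, T.range_embed]
  | add_one β ih => rw [norTower_add_one, ih (le_self_add.trans h), T.normalizer_range_map hG h]
  | limit β hβ ih =>
    rw [norTower_of_isSuccLimit _ hβ, ← T.iSup_range_map_of_isSuccLimit hβ h]
    exact iSup_congr fun o => iSup_congr fun ho => ih o ho (ho.le.trans h)
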